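/- Suppose a nonnegative sequence h_t satisfies h_1 ≤ βD²/2 and h_{t+1} ≤ (1 − 1/(t+1)) h_t + βD²/(2(t+1)²) + A/(t+1)^{3/2} for all t ≥ 1, where A, β, D > 0. Then h_t ≤ 3(βD² + A)/√(t+1) for all t ≥ 1. -/

import Mathlib

/-!
Induct on `h t ≤ C / √(t + 1)` with `C = 3 (βD² + A)`. Writing `s = t + 1`, the contraction
factor `1 - 1/s` turns the bound `C / √s` into `C / √s - C / s^{3/2}`. By convexity of
`x ↦ x^{-1/2}`, passing from `C / √s` to `C / √(s + 1)` costs only `C / (2 s^{3/2})`, and the other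
half of the gain absorbs the error terms `βD² / (2 s²) + A / s^{3/2}` because `βD² + 2A ≤ C`.
-/

open Real

theorem Real.rpow_three_halves {x : ℝ} (hx : 0 ≤ x) : x ^ (3 / 2 : ℝ) = x * √x := by
  rw [show (3 / 2 : ℝ) = 1 + 1 / 2 by norm_num, rpow_add' hx (by norm_num), rpow_one,
    sqrt_eq_rpow]

theorem one_div_sqrt_sub_one_div_sqrt_add_one_le {x : ℝ} (hx : 0 < x) :
    1 / √x - 1 / √(x + 1) ≤ 1 / (2 * x ^ (3 / 2 : ℝ)) := by
  rw [rpow_three_halves hx.le]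
  set a := √x
  set b := √(x + 1)
  have ha_pos : 0 < a := sqrt_pos.mpr hx
  have hab : a ≤ b := sqrt_le_sqrt (by linarith)
  have hba : b ^ 2 - a ^ 2 = 1 := by
    rw [sq_sqrt hx.le, sq_sqrt (by linarith)]; ring
  have hx_eq : x = a ^ 2 := (sq_sqrt hx.le).symm
  rw [hx_eq, div_sub_div _ _ ha_pos.ne' (by positivity),
    div_le_div_iff₀ (by positivity) (by positivity)]
  -- since `(b - a) (b + a) = 1`, this is `2 a² ≤ b (a + b)`
  nlinarith [mul_le_mul_of_nonneg_left hab ha_pos.le]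

theorem recursion_step_le_div_sqrt {s u A B C : ℝ} (hs : 1 ≤ s) (hB : 0 ≤ B) (hC : 0 ≤ C)
    (hBAC : B + 2 * A ≤ C) (hu : u ≤ C / √s) :
    (1 - 1 / s) * u + B / (2 * s ^ 2) + A / s ^ (3 / 2 : ℝ) ≤ C / √(s + 1) := by
  have hs0 : 0 < s := by linarith
  have hconv := mul_le_mul_of_nonneg_left (one_div_sqrt_sub_one_div_sqrt_add_one_le hs0) hC
  have hcoef : 0 ≤ 1 - 1 / s := by rw [sub_nonneg, div_le_one hs0]; exact hs
  have hu' := mul_le_mul_of_nonneg_left hu hcoef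
  rw [rpow_three_halves hs0.le] at hconv ⊢
  have hs_le : s * √s ≤ s ^ 2 := by
    rw [sq]; exact mul_le_mul_of_nonneg_left (sqrt_le_self_iff.mpr (.inr hs)) hs0.le
  have key : B / (2 * s ^ 2) + A / (s * √s) ≤ C / (2 * (s * √s)) := by
    calc B / (2 * s ^ 2) + A / (s * √s) ≤ B / (2 * (s * √s)) + A / (s * √s) := by gcongr
      _ = (B + 2 * A) / (2 * (s * √s)) := by field_simp
      _ ≤ C / (2 * (s * √s)) := by gcongr
  have hexpand : (1 - 1 / s) * (C / √s) = C / √s - C / (s * √s) := by field_simp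
  have hconv' : C / √s - C / √(s + 1) ≤ C / (2 * (s * √s)) := by
    simpa only [mul_sub, mul_one_div] using hconv
  have hhalf : C / (2 * (s * √s)) = C / (s * √s) - C / (2 * (s * √s)) := by field_simp; ring
  linarith

theorem l1_fw_induction_general (h : ℕ → ℝ) (A β D : ℝ) (hA : 0 < A) (hβ : 0 < β)
    (h1 : h 1 ≤ β * D ^ 2 / 2)
    (hrec : ∀ t ≥ 1, h (t + 1) ≤ (1 - 1 / ((t : ℝ) + 1)) * h t
      + β * D ^ 2 / (2 * ((t : ℝ) + 1) ^ 2) + A / ((t : ℝ) + 1) ^ ((3 : ℝ) / 2)) :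
    ∀ t ≥ 1, h t ≤ 3 * (β * D ^ 2 + A) / Real.sqrt ((t : ℝ) + 1) := by
  have hB : 0 ≤ β * D ^ 2 := by positivity
  have hC : 0 ≤ 3 * (β * D ^ 2 + A) := by positivity
  refine Nat.le_induction ?base fun t ht ih => ?step
  case base =>
    have hsqrt : √((1 : ℕ) + 1 : ℝ) ≤ 2 := by norm_num [sqrt_le_left]
    calc h 1 ≤ β * D ^ 2 / 2 := h1
      _ ≤ 3 * (β * D ^ 2 + A) / 2 := by linarith
      _ ≤ 3 * (β * D ^ 2 + A) / √((1 : ℕ) + 1 : ℝ) := by gcongr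
  case step =>
    have hs : (1 : ℝ) ≤ t + 1 := by linarith [(Nat.one_le_cast.mpr ht : (1 : ℝ) ≤ t)]
    have hstep := recursion_step_le_div_sqrt (A := A) hs hB hC (by linarith) ih
    push_cast
    exact (hrec t ht).trans hstep

theorem l1_fw_induction (h : ℕ → ℝ) (A β D : ℝ) (hA : 0 < A) (hβ : 0 < β) (hD : 0 < D)
    (hpos : ∀ t, 0 ≤ h t)
    (h1 : h 1 ≤ β * D ^ 2 / 2)
    (hrec : ∀ t ≥ 1, h (t + 1) ≤ (1 - 1 / ((t : ℝ) + 1)) * h t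
      + β * D ^ 2 / (2 * ((t : ℝ) + 1) ^ 2) + A / ((t : ℝ) + 1) ^ ((3 : ℝ) / 2)) :
    ∀ t ≥ 1, h t ≤ 3 * (β * D ^ 2 + A) / Real.sqrt ((t : ℝ) + 1) :=
  l1_fw_induction_general h A β D hA hβ h1 hrec
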